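/- arXiv:1506.01349 — 3 statements merged into one kernel-verified Lean document; each statement's English description precedes it below -/
import Mathlib

section
/- Let X be a real random variable with the normal distribution of mean μ ∈ ℝ and variance σ² with σ > 0, and let f* ∈ ℝ. Then the expected improvement E[(X − f*)⁺] = E[max(X − f*, 0)] equals (μ − f*) Φ((μ − f*)/σ) + σ φ((μ − f*)/σ), where φ is the standard normal probability density function and Φ is the standard normal cumulative distribution function. -/
open ProbabilityTheory

/-- The standard normal probability density function. -/
noncomputable def stdNormalPdf (z : ℝ) : ℝ :=
  (2 * Real.pi) ^ (-(1 : ℝ) / 2) * Real.exp (-z ^ 2 / 2)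

/-- The standard normal cumulative distribution function. -/
noncomputable def stdNormalCdf (z : ℝ) : ℝ :=
  ∫ t in Set.Iic z, stdNormalPdf t

/-!
Write `X = μ + σ Z` with `Z` standard normal and `a = μ - f*`. Then `(X - f*)⁺` is `σ Z + a`
when `Z > -a/σ` and `0` otherwise, so the expectation splits as
`σ ∫_{-a/σ}^∞ t φ(t) dt + a ∫_{-a/σ}^∞ φ(t) dt`. Since `φ' = -t φ`, the first integral is
`φ(-a/σ) = φ(a/σ)`, and by symmetry of `φ` the second is `Φ(a/σ)`.
-/

open MeasureTheory Set Filter Topology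

lemma stdNormalPdf_eq_gaussianPDFReal : stdNormalPdf = gaussianPDFReal 0 1 := by
  funext x
  rw [stdNormalPdf, gaussianPDFReal, Real.sqrt_eq_rpow, ← Real.rpow_neg (by positivity)]
  norm_num

lemma stdNormalPdf_neg (x : ℝ) : stdNormalPdf (-x) = stdNormalPdf x := by
  simp [stdNormalPdf]

lemma hasDerivAt_stdNormalPdf (x : ℝ) :
    HasDerivAt stdNormalPdf (-(x * stdNormalPdf x)) x := by
  have hexponent : HasDerivAt (fun t : ℝ => -t ^ 2 / 2) (-x) x :=
    (((hasDerivAt_pow 2 x).neg).div_const 2).congr_deriv (by push_cast; ring)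
  exact (hexponent.exp.const_mul ((2 * Real.pi) ^ (-(1 : ℝ) / 2))).congr_deriv
    (by rw [stdNormalPdf]; ring)

lemma tendsto_stdNormalPdf_atTop : Tendsto stdNormalPdf atTop (𝓝 0) := by
  rw [show (0 : ℝ) = (2 * Real.pi) ^ (-(1 : ℝ) / 2) * 0 by simp]
  refine (Real.tendsto_exp_atBot.comp ?_).const_mul _
  exact (tendsto_neg_atTop_atBot.comp (tendsto_pow_atTop two_ne_zero)).atBot_div_const two_pos

lemma integrable_stdNormalPdf : Integrable stdNormalPdf := by
  rw [stdNormalPdf_eq_gaussianPDFReal]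
  exact integrable_gaussianPDFReal 0 1

lemma integrable_mul_stdNormalPdf : Integrable fun t => t * stdNormalPdf t := by
  refine ((integrable_mul_exp_neg_mul_sq (by norm_num : (0 : ℝ) < 1 / 2)).const_mul
    ((2 * Real.pi) ^ (-(1 : ℝ) / 2))).congr (ae_of_all _ fun x => ?_)
  simp only [stdNormalPdf]
  ring_nf

lemma integral_Ioi_mul_stdNormalPdf (c : ℝ) :
    ∫ t in Ioi c, t * stdNormalPdf t = stdNormalPdf c := by
  have hderiv (x : ℝ) (_ : x ∈ Ici c) :
      HasDerivAt (fun t => -stdNormalPdf t) (x * stdNormalPdf x) x := by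
    simpa using (hasDerivAt_stdNormalPdf x).fun_neg
  rw [integral_Ioi_of_hasDerivAt_of_tendsto' hderiv integrable_mul_stdNormalPdf.integrableOn
    (by simpa using tendsto_stdNormalPdf_atTop.neg)]
  simp

lemma integral_Ioi_stdNormalPdf (c : ℝ) :
    ∫ t in Ioi c, stdNormalPdf t = stdNormalCdf (-c) := by
  rw [stdNormalCdf, ← integral_comp_neg_Ioi]
  simp [stdNormalPdf_neg]

lemma gaussianReal_eq_map_affine (μ σ : ℝ) :
    gaussianReal μ ⟨σ ^ 2, sq_nonneg σ⟩ = (gaussianReal 0 1).map (fun t => σ * t + μ) := by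
  rw [show (fun t : ℝ => σ * t + μ) = (· + μ) ∘ (σ * ·) from rfl,
    ← Measure.map_map (measurable_add_const μ) (measurable_const_mul σ),
    gaussianReal_map_const_mul, gaussianReal_map_add_const]
  congr 1
  · ring
  · exact (mul_one _).symm

lemma integral_stdGaussian_eq_integral_stdNormalPdf_mul (f : ℝ → ℝ) :
    ∫ x, f x ∂gaussianReal 0 1 = ∫ x, stdNormalPdf x * f x := by
  rw [integral_gaussianReal_eq_integral_smul one_ne_zero, stdNormalPdf_eq_gaussianPDFReal]
  rfl

lemma max_affine_zero_eq_indicator {σ : ℝ} (hσ : 0 < σ) (a t : ℝ) :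
    max (σ * t + a) 0 = (Ioi (-(a / σ))).indicator (fun t => σ * t + a) t := by
  have hshift : σ * (-(a / σ)) = -a := by field_simp
  by_cases ht : t ∈ Ioi (-(a / σ))
  · have : σ * (-(a / σ)) < σ * t := mul_lt_mul_of_pos_left (mem_Ioi.1 ht) hσ
    rw [indicator_of_mem ht, max_eq_left (by linarith)]
  · have : σ * t ≤ σ * (-(a / σ)) :=
      mul_le_mul_of_nonneg_left (not_lt.1 (mt mem_Ioi.2 ht)) hσ.le
    rw [indicator_of_notMem ht, max_eq_right (by linarith)]

lemma integral_stdNormalPdf_mul_max_affine_zero {σ : ℝ} (hσ : 0 < σ) (a : ℝ) :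
    ∫ t, stdNormalPdf t * max (σ * t + a) 0
      = a * stdNormalCdf (a / σ) + σ * stdNormalPdf (a / σ) := by
  have hsplit (t : ℝ) : stdNormalPdf t * max (σ * t + a) 0
      = (Ioi (-(a / σ))).indicator
          (fun t => σ * (t * stdNormalPdf t) + a * stdNormalPdf t) t := by
    rw [max_affine_zero_eq_indicator hσ, ← indicator_mul_right]
    congr 1
    ext t
    ring
  simp_rw [hsplit]
  rw [integral_indicator measurableSet_Ioi,
    integral_add (integrable_mul_stdNormalPdf.const_mul σ).integrableOn
      (integrable_stdNormalPdf.const_mul a).integrableOn,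
    integral_const_mul, integral_const_mul, integral_Ioi_mul_stdNormalPdf,
    integral_Ioi_stdNormalPdf, neg_neg, stdNormalPdf_neg]
  ring

/-- The expected improvement formula: if `X` is normally distributed with mean `μ` and
variance `σ²`, then `E[(X - f*)⁺] = (μ - f*) Φ((μ - f*)/σ) + σ φ((μ - f*)/σ)`. -/
theorem stmt4 (μ fstar σ : ℝ) (hσ : 0 < σ) :
    ∫ z, max (z - fstar) 0 ∂(gaussianReal μ ⟨σ ^ 2, sq_nonneg σ⟩)
      = (μ - fstar) * stdNormalCdf ((μ - fstar) / σ) + σ * stdNormalPdf ((μ - fstar) / σ) := by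
  rw [gaussianReal_eq_map_affine, integral_map (by fun_prop) (by fun_prop),
    integral_stdGaussian_eq_integral_stdNormalPdf_mul]
  simp_rw [add_sub_assoc]
  exact integral_stdNormalPdf_mul_max_affine_zero hσ (μ - fstar)
end

section
/- Fix a symmetric covariance function Σ₀, a mean function μ₀, points x₁,…,x_{n+1}, observations y₁,…,y_{n+1} ∈ ℝ, and λ² ≥ 0. Suppose both Kₙ = Σ₀(x_{1:n},x_{1:n}) + λ² Iₙ and K_{n+1} = Σ₀(x_{1:n+1},x_{1:n+1}) + λ² I_{n+1} are invertible. Define, for any point x, the posterior means μₙ(x) = μ₀(x) + Σ₀(x, x_{1:n}) Kₙ⁻¹ (y_{1:n} − μ₀(x_{1:n})) and μ_{n+1}(x) = μ₀(x) + Σ₀(x, x_{1:n+1}) K_{n+1}⁻¹ (y_{1:n+1} − μ₀(x_{1:n+1})), and the posterior covariance Σₙ(x, x') = Σ₀(x, x') − Σ₀(x, x_{1:n}) Kₙ⁻¹ Σ₀(x_{1:n}, x'). If Σₙ(x_{n+1}, x_{n+1}) + λ² ≠ 0, then for every point x: μ_{n+1}(x) = μₙ(x) + (Σₙ(x, x_{n+1})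 / (Σₙ(x_{n+1}, x_{n+1}) + λ²)) (y_{n+1} − μₙ(x_{n+1})). -/
open Matrix

/-- The kernel matrix `Σ₀(x_{1:n}, x_{1:n}) + λ² Iₙ`. -/
noncomputable def kernelMat {X : Type*} (S₀ : X → X → ℝ) {n : ℕ} (x : Fin n → X) (lam2 : ℝ) :
    Matrix (Fin n) (Fin n) ℝ :=
  (Matrix.of fun i j => S₀ (x i) (x j)) + lam2 • 1

/-- The Gaussian process posterior mean
`μₙ(z) = μ₀(z) + Σ₀(z, x_{1:n}) (Σ₀(x_{1:n},x_{1:n}) + λ²Iₙ)⁻¹ (y_{1:n} - μ₀(x_{1:n}))`. -/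
noncomputable def postMean {X : Type*} {n : ℕ} (S₀ : X → X → ℝ) (μ₀ : X → ℝ)
    (x : Fin n → X) (y : Fin n → ℝ) (lam2 : ℝ) (z : X) : ℝ :=
  μ₀ z + (fun i => S₀ z (x i)) ⬝ᵥ ((kernelMat S₀ x lam2)⁻¹ *ᵥ (y - fun i => μ₀ (x i)))

/-- The Gaussian process posterior covariance
`Σₙ(z, z') = Σ₀(z,z') - Σ₀(z, x_{1:n}) (Σ₀(x_{1:n},x_{1:n}) + λ²Iₙ)⁻¹ Σ₀(x_{1:n}, z')`. -/
noncomputable def postCov {X : Type*} {n : ℕ} (S₀ : X → X → ℝ) (x : Fin n → X) (lam2 : ℝ)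
    (z z' : X) : ℝ :=
  S₀ z z' - (fun i => S₀ z (x i)) ⬝ᵥ ((kernelMat S₀ x lam2)⁻¹ *ᵥ fun i => S₀ (x i) z')

/-- One-step recursive update of the Gaussian process posterior mean upon receiving the
`(n+1)`-st observation:
`μ_{n+1}(z) = μₙ(z) + (Σₙ(z, x_{n+1})/(Σₙ(x_{n+1},x_{n+1}) + λ²)) (y_{n+1} - μₙ(x_{n+1}))`. -/
theorem stmt10 {X : Type*} (n : ℕ) (x : Fin (n + 1) → X) (y : Fin (n + 1) → ℝ)
    (μ₀ : X → ℝ) (S₀ : X → X → ℝ) (hsym : ∀ a b, S₀ a b = S₀ b a)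
    (lam2 : ℝ) (hlam : 0 ≤ lam2)
    (hKn : IsUnit (kernelMat S₀ (x ∘ Fin.castSucc) lam2).det)
    (hKn1 : IsUnit (kernelMat S₀ x lam2).det)
    (hden :
      postCov S₀ (x ∘ Fin.castSucc) lam2 (x (Fin.last n)) (x (Fin.last n)) + lam2 ≠ 0) :
    ∀ z : X,
      postMean S₀ μ₀ x y lam2 z
        = postMean S₀ μ₀ (x ∘ Fin.castSucc) (y ∘ Fin.castSucc) lam2 z +
          (postCov S₀ (x ∘ Fin.castSucc) lam2 z (x (Fin.last n)) /
              (postCov S₀ (x ∘ Fin.castSucc) lam2 (x (Fin.last n)) (x (Fin.last n)) + lam2)) *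
            (y (Fin.last n) -
              postMean S₀ μ₀ (x ∘ Fin.castSucc) (y ∘ Fin.castSucc) lam2 (x (Fin.last n))) := by
  intro z
  set Ai := (kernelMat S₀ (x ∘ Fin.castSucc) lam2)⁻¹ with hAi
  set b : Fin n → ℝ := fun i => S₀ (x i.castSucc) (x (Fin.last n)) with hbdef
  set u0 : Fin n → ℝ := fun i => y i.castSucc - μ₀ (x i.castSucc) with hu0def
  have hbs : (fun i => S₀ (x (Fin.last n)) (x (Fin.castSucc i))) = b :=
    funext fun i => hsym _ _
  set s : ℝ := postCov S₀ (x ∘ Fin.castSucc) lam2 (x (Fin.last n)) (x (Fin.last n)) + lam2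
    with hsdef
  have hseq : s = (S₀ (x (Fin.last n)) (x (Fin.last n)) + lam2) - b ⬝ᵥ (Ai *ᵥ b) := by
    rw [hsdef, postCov]
    simp only [Function.comp_apply, ← hAi, ← hbdef, hbs]
    ring
  set num : ℝ := y (Fin.last n) - μ₀ (x (Fin.last n)) - b ⬝ᵥ (Ai *ᵥ u0) with hnumdef
  have hnum : num = y (Fin.last n) -
      postMean S₀ μ₀ (x ∘ Fin.castSucc) (y ∘ Fin.castSucc) lam2 (x (Fin.last n)) := by
    rw [hnumdef, postMean]
    simp only [Function.comp_apply, ← hAi, hbs]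
    rw [show ((y ∘ Fin.castSucc) - fun i => μ₀ (x i.castSucc)) = u0 from rfl]
    ring
  have hu0' : ((y ∘ Fin.castSucc) - fun i => μ₀ (x i.castSucc)) = u0 := rfl
  set α : ℝ := num / s with hα
  set g : Fin n → ℝ := Ai *ᵥ u0 - α • (Ai *ᵥ b) with hg
  set v : Fin (n + 1) → ℝ := Fin.snoc g α with hv
  -- kernel matrix entries
  have hKcc : ∀ i j : Fin n, kernelMat S₀ x lam2 i.castSucc j.castSucc
      = kernelMat S₀ (x ∘ Fin.castSucc) lam2 i j := by
    intro i j; simp [kernelMat, Matrix.one_apply, Fin.castSucc_inj]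
  have hKcl : ∀ i : Fin n, kernelMat S₀ x lam2 i.castSucc (Fin.last n) = b i := by
    intro i
    simp [kernelMat, Matrix.one_apply, (Fin.castSucc_lt_last i).ne, hbdef]
  have hKlc : ∀ j : Fin n, kernelMat S₀ x lam2 (Fin.last n) j.castSucc = b j := by
    intro j
    simp only [kernelMat, Matrix.add_apply, Matrix.of_apply, Matrix.smul_apply,
      Matrix.one_apply_ne (Fin.castSucc_lt_last j).ne', smul_eq_mul, mul_zero, add_zero, hbdef]
    exact hsym _ _
  have hKll : kernelMat S₀ x lam2 (Fin.last n) (Fin.last n)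
      = S₀ (x (Fin.last n)) (x (Fin.last n)) + lam2 := by
    simp [kernelMat, Matrix.one_apply]
  have hAinv : ∀ w : Fin n → ℝ,
      kernelMat S₀ (x ∘ Fin.castSucc) lam2 *ᵥ (Ai *ᵥ w) = w := by
    intro w
    rw [hAi, Matrix.mulVec_mulVec, Matrix.mul_nonsing_inv _ hKn, Matrix.one_mulVec]
  clear_value v g α num s
  have hKv : kernelMat S₀ x lam2 *ᵥ v = (y - fun i => μ₀ (x i)) := by
    funext i
    induction i using Fin.lastCases with
    | last =>
      have h0 : (kernelMat S₀ x lam2 *ᵥ v) (Fin.last n) =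
          b ⬝ᵥ g + (S₀ (x (Fin.last n)) (x (Fin.last n)) + lam2) * α := by
        rw [Matrix.mulVec, dotProduct, Fin.sum_univ_castSucc, dotProduct]
        congr 1
        · refine Finset.sum_congr rfl fun j _ => ?_
          rw [hKlc j, hv, Fin.snoc_castSucc]
        · rw [hKll, hv, Fin.snoc_last]
      rw [h0, hg, dotProduct_sub, dotProduct_smul, smul_eq_mul]
      have hαs : α * s = num := by rw [hα]; exact div_mul_cancel₀ num hden
      have e2 : b ⬝ᵥ (Ai *ᵥ u0) - α * (b ⬝ᵥ (Ai *ᵥ b))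
            + (S₀ (x (Fin.last n)) (x (Fin.last n)) + lam2) * α
          = b ⬝ᵥ (Ai *ᵥ u0) + α * s := by rw [hseq]; ring
      rw [e2, hαs]
      show b ⬝ᵥ (Ai *ᵥ u0) + num = y (Fin.last n) - μ₀ (x (Fin.last n))
      rw [hnumdef]; ring
    | cast i =>
      have h0 : (kernelMat S₀ x lam2 *ᵥ v) i.castSucc =
          (kernelMat S₀ (x ∘ Fin.castSucc) lam2 *ᵥ g) i + b i * α := by
        rw [Matrix.mulVec, dotProduct, Fin.sum_univ_castSucc,
          Matrix.mulVec, dotProduct]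
        congr 1
        · refine Finset.sum_congr rfl fun j _ => ?_
          rw [hKcc i j, hv, Fin.snoc_castSucc]
        · rw [hKcl i, hv, Fin.snoc_last]
      rw [h0, hg, Matrix.mulVec_sub, Matrix.mulVec_smul, hAinv, hAinv]
      show u0 i - (α • b) i + b i * α = y i.castSucc - μ₀ (x i.castSucc)
      rw [hu0def]
      show y i.castSucc - μ₀ (x i.castSucc) - α * b i + b i * α
        = y i.castSucc - μ₀ (x i.castSucc)
      ring
  have hvinv : (kernelMat S₀ x lam2)⁻¹ *ᵥ (y - fun i => μ₀ (x i)) = v := by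
    rw [← hKv, Matrix.mulVec_mulVec, Matrix.nonsing_inv_mul _ hKn1, Matrix.one_mulVec]
  rw [postMean, hvinv]
  have hdot : (fun i => S₀ z (x i)) ⬝ᵥ v =
      (fun i => S₀ z (x i.castSucc)) ⬝ᵥ (Ai *ᵥ u0)
        + α * (S₀ z (x (Fin.last n))
            - (fun i => S₀ z (x i.castSucc)) ⬝ᵥ (Ai *ᵥ b)) := by
    rw [dotProduct, Fin.sum_univ_castSucc]
    have h1 : (∑ j : Fin n, S₀ z (x j.castSucc) * v j.castSucc)
        = (fun i : Fin n => S₀ z (x i.castSucc)) ⬝ᵥ g := by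
      refine Finset.sum_congr rfl fun j _ => ?_
      rw [hv, Fin.snoc_castSucc]
    rw [h1, hg, dotProduct_sub, dotProduct_smul, smul_eq_mul, hv, Fin.snoc_last]
    ring
  rw [hdot]
  have hpm : postMean S₀ μ₀ (x ∘ Fin.castSucc) (y ∘ Fin.castSucc) lam2 z =
      μ₀ z + (fun i => S₀ z (x i.castSucc)) ⬝ᵥ (Ai *ᵥ u0) := by
    rw [postMean]
    simp only [Function.comp_apply, ← hAi]
    rw [hu0']
  have hpc : postCov S₀ (x ∘ Fin.castSucc) lam2 z (x (Fin.last n)) =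
      S₀ z (x (Fin.last n)) - (fun i => S₀ z (x i.castSucc)) ⬝ᵥ (Ai *ᵥ b) := by
    rw [postCov]; simp only [Function.comp_apply, ← hAi, ← hbdef]
  rw [hpm, hpc, ← hnum, hα]
  field_simp
  ring
end

section
/- Consider noise-free Gaussian process regression (λ = 0) with symmetric covariance function Σ₀, mean function μ₀, distinct evaluated points x₁,…,xₙ with observed values yᵢ = f(xᵢ), such that Kₙ = Σ₀(x_{1:n},x_{1:n}) is invertible, and a candidate point x = x_{n+1} with posterior variance σₙ²(x) = Σ₀(x,x) − Σ₀(x,x_{1:n}) Kₙ⁻¹ Σ₀(x_{1:n},x) > 0 and with K_{n+1} = Σ₀(x_{1:n+1},x_{1:n+1}) invertible. Let the value y_{n+1} of the new observation be a random variable with the normal distribution of mean μₙ(x) = μ₀(x) + Σ₀(x,x_{1:n}) Kₙ⁻¹ (y_{1:n} − μ₀(x_{1:n})) and variance σₙ²(x), and define μ_{n+1}(·) to be the posterior mean computed from the n+1 data points (x_{1:n+1}, y_{1:n+1}). Then the knowledge-gradient factor with Aₙ = {x₁,…,xₙ} and A_{n+1} = {x₁,…,x_{n+1}}, namely KGₙ(x)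 = E[max_{i=1,…,n+1} μ_{n+1}(xᵢ)] − max_{i=1,…,n} μₙ(xᵢ), equals the expected improvement EI(x) = E[(y_{n+1} − f*ₙ)⁺], where f*ₙ = max_{i=1,…,n} yᵢ. -/
open Matrix ProbabilityTheory

open MeasureTheory

/-!
Without noise the posterior mean interpolates the data, since the row of `Σ₀(x_j, x_{1:n})` is
the `j`-th row of `Kₙ` and cancels against `Kₙ⁻¹`. Hence `max_{i≤n} μₙ(xᵢ) = f*ₙ` and
`max_{i≤n+1} μ_{n+1}(xᵢ) = max(f*ₙ, y_{n+1}) = f*ₙ + (y_{n+1} - f*ₙ)⁺`; taking expectations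
(`y_{n+1}` is Gaussian, hence integrable) turns the knowledge gradient into the expected
improvement.
-/

theorem postMean_zero_apply_self {X : Type*} {m : ℕ} (S₀ : X → X → ℝ) (μ₀ : X → ℝ)
    (x : Fin m → X) (y : Fin m → ℝ) (hK : IsUnit (kernelMat S₀ x 0).det) (j : Fin m) :
    postMean S₀ μ₀ x y 0 (x j) = y j := by
  have hrow : ∀ v, (fun i => S₀ (x j) (x i)) ⬝ᵥ v = (kernelMat S₀ x 0 *ᵥ v) j := by
    simp [kernelMat, mulVec]
  rw [postMean, hrow, mulVec_mulVec, mul_nonsing_inv _ hK, one_mulVec]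
  simp

theorem ciSup_snoc {α : Type*} [ConditionallyCompleteLinearOrder α] {n : ℕ} [Nonempty (Fin n)]
    (y : Fin n → α) (a : α) :
    ⨆ i, (Fin.snoc y a : Fin (n + 1) → α) i = max (⨆ i, y i) a := by
  refine le_antisymm (ciSup_le fun i => ?_) (max_le (ciSup_le fun i => ?_) ?_)
  · induction i using Fin.lastCases with
    | last => simp
    | cast i => simpa using le_max_of_le_left (le_ciSup (Finite.bddAbove_range y) i)
  · simpa using le_ciSup (Finite.bddAbove_range (Fin.snoc y a : Fin (n + 1) → α)) i.castSucc
  · simpa using le_ciSup (Finite.bddAbove_range (Fin.snoc y a : Fin (n + 1) → α)) (Fin.last n)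

theorem integral_max_sub_eq_integral_max_sub_zero (ν : Measure ℝ) [IsProbabilityMeasure ν]
    (hν : Integrable id ν) (c : ℝ) :
    ∫ w, max c w ∂ν - c = ∫ w, max (w - c) 0 ∂ν := by
  have hpos : Integrable (fun w => max (w - c) 0) ν :=
    (hν.sub (integrable_const c)).pos_part
  have hsplit : ∀ w : ℝ, max c w = max (w - c) 0 + c := fun w => by
    rw [← max_add_add_right, sub_add_cancel, zero_add, max_comm]
  simp only [hsplit]
  rw [integral_add hpos (integrable_const c), integral_const, probReal_univ, one_smul,
    add_sub_cancel_right]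

theorem stmt12_general {X : Type*} (n : ℕ) (hn : 0 < n) (x : Fin (n + 1) → X) (yobs : Fin n → ℝ)
    (μ₀ : X → ℝ) (S₀ : X → X → ℝ)
    (hKn : IsUnit (kernelMat S₀ (x ∘ Fin.castSucc) 0).det)
    (hKn1 : IsUnit (kernelMat S₀ x 0).det)
    (hσ : 0 < postCov S₀ (x ∘ Fin.castSucc) 0 (x (Fin.last n)) (x (Fin.last n))) :
    (∫ w, (⨆ i : Fin (n + 1), postMean S₀ μ₀ x (Fin.snoc yobs w) 0 (x i))
          ∂(gaussianReal (postMean S₀ μ₀ (x ∘ Fin.castSucc) yobs 0 (x (Fin.last n)))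
            ⟨postCov S₀ (x ∘ Fin.castSucc) 0 (x (Fin.last n)) (x (Fin.last n)), hσ.le⟩))
        - (⨆ i : Fin n, postMean S₀ μ₀ (x ∘ Fin.castSucc) yobs 0 (x i.castSucc))
      = ∫ w, max (w - ⨆ i, yobs i) 0
          ∂(gaussianReal (postMean S₀ μ₀ (x ∘ Fin.castSucc) yobs 0 (x (Fin.last n)))
            ⟨postCov S₀ (x ∘ Fin.castSucc) 0 (x (Fin.last n)) (x (Fin.last n)), hσ.le⟩) := by
  have : Nonempty (Fin n) := ⟨⟨0, hn⟩⟩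
  have hold : ∀ i : Fin n,
      postMean S₀ μ₀ (x ∘ Fin.castSucc) yobs 0 (x i.castSucc) = yobs i :=
    postMean_zero_apply_self S₀ μ₀ _ yobs hKn
  have hnew : ∀ w, ⨆ i : Fin (n + 1), postMean S₀ μ₀ x (Fin.snoc yobs w) 0 (x i)
      = max (⨆ i, yobs i) w := fun w => by
    simp only [postMean_zero_apply_self S₀ μ₀ x _ hKn1, ciSup_snoc]
  simp only [hold, hnew]
  -- instance search does not see `⟨_, hσ.le⟩ : {r // 0 ≤ r}` as an `ℝ≥0`
  have := isGaussian_gaussianReal (postMean S₀ μ₀ (x ∘ Fin.castSucc) yobs 0 (x (Fin.last n)))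
    ⟨_, hσ.le⟩
  exact integral_max_sub_eq_integral_max_sub_zero _ IsGaussian.integrable_id _

/-- In noise-free Gaussian process regression (`λ = 0`), with `Aₙ = {x₁,…,xₙ}` and
`A_{n+1} = {x₁,…,x_{n+1}}`, and the value `y_{n+1}` of the new observation at the candidate
point `x_{n+1}` distributed normally with mean `μₙ(x_{n+1})` and variance `σₙ²(x_{n+1}) > 0`,
the knowledge-gradient factor `E[max_{i≤n+1} μ_{n+1}(xᵢ)] - max_{i≤n} μₙ(xᵢ)` equals the
expected improvement `E[(y_{n+1} - f*ₙ)⁺]`, where `f*ₙ = max_{i≤n} yᵢ`. -/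
theorem stmt12 {X : Type*} (n : ℕ) (hn : 0 < n) (x : Fin (n + 1) → X) (yobs : Fin n → ℝ)
    (μ₀ : X → ℝ) (S₀ : X → X → ℝ) (hsym : ∀ a b, S₀ a b = S₀ b a)
    (hdist : Function.Injective (x ∘ Fin.castSucc))
    (hKn : IsUnit (kernelMat S₀ (x ∘ Fin.castSucc) 0).det)
    (hKn1 : IsUnit (kernelMat S₀ x 0).det)
    (hσ : 0 < postCov S₀ (x ∘ Fin.castSucc) 0 (x (Fin.last n)) (x (Fin.last n))) :
    (∫ w, (⨆ i : Fin (n + 1), postMean S₀ μ₀ x (Fin.snoc yobs w) 0 (x i))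
          ∂(gaussianReal (postMean S₀ μ₀ (x ∘ Fin.castSucc) yobs 0 (x (Fin.last n)))
            ⟨postCov S₀ (x ∘ Fin.castSucc) 0 (x (Fin.last n)) (x (Fin.last n)), hσ.le⟩))
        - (⨆ i : Fin n, postMean S₀ μ₀ (x ∘ Fin.castSucc) yobs 0 (x i.castSucc))
      = ∫ w, max (w - ⨆ i, yobs i) 0
          ∂(gaussianReal (postMean S₀ μ₀ (x ∘ Fin.castSucc) yobs 0 (x (Fin.last n)))
            ⟨postCov S₀ (x ∘ Fin.castSucc) 0 (x (Fin.last n)) (x (Fin.last n)), hσ.le⟩) :=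
  stmt12_general n hn x yobs μ₀ S₀ hKn hKn1 hσ
end
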